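/- Let E be an equivalence relation on Cantor space represented by a swap-closed triple tree T. Then for every ordinal α, the relation E_α on 2^ω defined by X E_α Y iff rk(T̂_{X,Y}) ≥ α is an equivalence relation (reflexive, symmetric, and transitive). -/

import Mathlib

open MeasureTheory

/-- Cantor space `2^ω`. -/
abbrev Cantor : Type := ℕ → Bool

/-- Triples `(σ, s, τ)` of finite sequences: `σ, τ` Boolean-valued, `s` natural-number valued. -/
abbrev Trip : Type := List Bool × List ℕ × List Bool

/-- A *triple tree*: a set of equal-length triples of finite sequences which is prefix-closed
(simultaneously restricting all three coordinates to a common shorter length stays in the set). -/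
def IsTripleTree (T : Set Trip) : Prop :=
  (∀ p ∈ T, p.2.1.length = p.1.length ∧ p.2.2.length = p.1.length) ∧
  (∀ p ∈ T, ∀ n : ℕ, (p.1.take n, p.2.1.take n, p.2.2.take n) ∈ T)

/-- The restriction `X↾n` of `X : 2^ω` to its first `n` values, as a finite sequence. -/
def res (X : Cantor) (n : ℕ) : List Bool := (List.range n).map X

/-- `T` represents the relation `E` on Cantor space: `X E Y` iff there is `f : ℕ → ℕ`
with `(X↾n, f↾n, Y↾n) ∈ T` for every `n`. -/
def Represents (T : Set Trip) (E : Set (Cantor × Cantor)) : Prop :=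
  ∀ X Y : Cantor,
    (X, Y) ∈ E ↔ ∃ f : ℕ → ℕ, ∀ n : ℕ, (res X n, (List.range n).map f, res Y n) ∈ T

/-- A triple tree is swap-closed if `(σ, s, τ) ∈ T ↔ (τ, s, σ) ∈ T`. -/
def SwapClosed (T : Set Trip) : Prop :=
  ∀ (σ : List Bool) (s : List ℕ) (τ : List Bool), (σ, s, τ) ∈ T ↔ (τ, s, σ) ∈ T

/-- Nodes of the trees `T^k_{X,Y}`: a node of length `n` is a tuple
`(s₁, t₁, s₂, t₂, …, t_{k-1}, s_k)` with each `sᵢ ∈ ℕ^n`, `tⱼ ∈ Bool^n`, encoded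
"transposed", as a list of length `n` whose `m`-th entry collects the `m`-th values
`((s₁ m, …, s_k m), (t₁ m, …, t_{k-1} m))`. -/
abbrev KNode : Type := List (List ℕ × List Bool)

/-- The sequence `s_{i+1} ∈ ℕ^n` (for `0 ≤ i < k`) encoded in a node `u`. -/
def col1 (u : KNode) (i : ℕ) : List ℕ := u.map fun e => e.1.getD i 0

/-- The sequence `t_{j+1} ∈ Bool^n` (for `0 ≤ j < k-1`) encoded in a node `u`. -/
def col2 (u : KNode) (j : ℕ) : List Bool := u.map fun e => e.2.getD j false

/-- The `i`-th boundary sequence (`0 ≤ i ≤ k`): `X↾n` for `i = 0`, `Y↾n` for `i = k`,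
and `t_i` for `0 < i < k`. -/
def bdry (X Y : Cantor) (k : ℕ) (u : KNode) (i : ℕ) : List Bool :=
  if i = 0 then res X u.length else if i = k then res Y u.length else col2 u (i - 1)

/-- The tree `T^k_{X,Y}`: nodes of length `n` are tuples `(s₁, t₁, …, t_{k-1}, s_k)` with
`(X↾n, s₁, t₁) ∈ T`, `(t₁, s₂, t₂) ∈ T`, …, `(t_{k-1}, s_k, Y↾n) ∈ T`. -/
def TkTree (T : Set Trip) (X Y : Cantor) (k : ℕ) : Set KNode :=
  {u | (∀ e ∈ u, e.1.length = k ∧ e.2.length = k - 1) ∧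
       ∀ i < k, (bdry X Y k u i, col1 u i, bdry X Y k u (i + 1)) ∈ T}

/-- Nodes of `T̂_{X,Y}`: the root (`none`), together with pairs `(k, u)`. -/
abbrev HatNode : Type := Option (ℕ × KNode)

/-- The tree `T̂_{X,Y}`: the disjoint union of the trees `T^k_{X,Y}` (`k ≥ 1`) with all the
roots identified: the root together with all pairs `(k, u)` with `u` a nonempty node
of `T^k_{X,Y}`. -/
def HatTree (T : Set Trip) (X Y : Cantor) : Set HatNode :=
  {p | p = none ∨ ∃ k u, p = some (k, u) ∧ 1 ≤ k ∧ u ≠ [] ∧ u ∈ TkTree T X Y k}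

/-- Proper (coordinatewise) prefix order on finite sequences. -/
def ListLt {A : Type*} (u v : List A) : Prop := u <+: v ∧ u ≠ v

/-- `HatLt p q`: the node `q` of `T̂` properly extends the node `p`: every node properly
extends the root, and `(k', u')` properly extends `(k, u)` iff `k = k'` and `u` is a proper
prefix of `u'`. -/
def HatLt : HatNode → HatNode → Prop
  | none, some _ => True
  | some (k, u), some (k', u') => k = k' ∧ ListLt u u'
  | _, none => False

/-- `RankGe S lt u α`: the rank of the node `u` in the tree `(S, lt)` is `≥ α`, defined by
transfinite recursion: for every `β < α` there is a node `v ∈ S` properly extending `u`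
(i.e. `lt u v`) whose rank is `≥ β`. -/
def RankGe {A : Type*} (S : Set A) (lt : A → A → Prop) (u : A) (α : Ordinal.{0}) : Prop :=
  ∀ β : Ordinal.{0}, β < α → ∃ v, v ∈ S ∧ lt u v ∧ RankGe S lt v β
termination_by α

/-- `rk(T̂_{X,Y}) ≥ α`: the root belongs to the tree and its rank is `≥ α`. -/
def HatRankGe (T : Set Trip) (X Y : Cantor) (α : Ordinal.{0}) : Prop :=
  none ∈ HatTree T X Y ∧ RankGe (HatTree T X Y) HatLt none α

/-- `rk(T^k_{X,Y}) ≥ α`: the root (the empty tuple) belongs to the tree and its rank is `≥ α`. -/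
def TkRankGe (T : Set Trip) (X Y : Cantor) (k : ℕ) (α : Ordinal.{0}) : Prop :=
  ([] : KNode) ∈ TkTree T X Y k ∧ RankGe (TkTree T X Y k) ListLt [] α

/-! `X E_α Y` can be read off the trees `T^k_{X,Y}`: a node `(k, u)` of `T̂_{X,Y}` of rank `≥ β`
is a nonempty node of `T^k_{X,Y}` of rank `≥ β`, so `rk(T̂_{X,Y}) ≥ α` iff for every `β < α` the
root of some `T^k_{X,Y}` has rank `≥ β + 1`.
Reflexivity: a witness for `X E X` is an infinite branch of `T^1_{X,X}`.
Symmetry: by swap-closure, reading a chain `X, s₁, t₁, …, s_k, Y` backwards embeds `T^k_{X,Y}`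
into `T^k_{Y,X}`.
Transitivity: joining chains at `Y` sends pairs of equally long nodes of `T^k_{X,Y}` and
`T^l_{Y,Z}` to nodes of `T^{k+l}_{X,Z}`; since `T` is prefix-closed, any two extensions can be cut
to a common length, so the join has rank at least the smaller of the two ranks. -/

section RankGe

variable {A B : Type*} {S : Set A} {lt : A → A → Prop}

theorem rankGe_iff (u : A) (α : Ordinal.{0}) :
    RankGe S lt u α ↔ ∀ β < α, ∃ v, v ∈ S ∧ lt u v ∧ RankGe S lt v β := by
  rw [RankGe]

theorem RankGe.mono {u : A} {α β : Ordinal.{0}} (hβ : β ≤ α) (h : RankGe S lt u α) :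
    RankGe S lt u β :=
  (rankGe_iff u β).2 fun γ hγ => (rankGe_iff u α).1 h γ (hγ.trans_le hβ)

theorem rankGe_succ_iff (u : A) (β : Ordinal.{0}) :
    RankGe S lt u (Order.succ β) ↔ ∃ v, v ∈ S ∧ lt u v ∧ RankGe S lt v β := by
  rw [rankGe_iff]
  refine ⟨fun h => h β (Order.lt_succ β), fun ⟨v, hv, huv, hrv⟩ γ hγ => ?_⟩
  exact ⟨v, hv, huv, hrv.mono (Order.lt_succ_iff.1 hγ)⟩

theorem RankGe.of_simulation {S' : Set B} {lt' : B → B → Prop} (R : A → B → Prop)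
    (hR : ∀ a b a', R a b → a' ∈ S → lt a a' → ∃ b', b' ∈ S' ∧ lt' b b' ∧ R a' b')
    {α : Ordinal.{0}} {a : A} {b : B} (hab : R a b) (h : RankGe S lt a α) :
    RankGe S' lt' b α := by
  induction α using WellFoundedLT.induction generalizing a b with
  | _ α IH =>
    rw [rankGe_iff] at h ⊢
    intro β hβ
    obtain ⟨a', ha', haa', hra'⟩ := h β hβ
    obtain ⟨b', hb', hbb', hab'⟩ := hR a b a' hab ha' haa'
    exact ⟨b', hb', hbb', IH β hβ hab' hra'⟩

theorem rankGe_of_chain (c : ℕ → A) (hS : ∀ n, c (n + 1) ∈ S) (hlt : ∀ n, lt (c n) (c (n + 1)))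
    (α : Ordinal.{0}) (n : ℕ) : RankGe S lt (c n) α := by
  induction α using WellFoundedLT.induction generalizing n with
  | _ α IH => exact (rankGe_iff _ _).2 fun β hβ => ⟨c (n + 1), hS n, hlt n, IH β hβ (n + 1)⟩

end RankGe

section ListLt

variable {A : Type*}

theorem ListLt.length_lt {u v : List A} (h : ListLt u v) : u.length < v.length :=
  h.1.length_le.lt_of_ne fun hl => h.2 (h.1.eq_of_length hl)

theorem ListLt.of_prefix {u v : List A} (h : u <+: v) (hl : u.length < v.length) : ListLt u v :=
  ⟨h, by rintro rfl; exact hl.false⟩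

theorem ListLt.ne_nil {u v : List A} (h : ListLt u v) : v ≠ [] := by
  rintro rfl
  simpa using h.length_lt

theorem ListLt.nil_left {v : List A} (h : v ≠ []) : ListLt [] v :=
  .of_prefix List.nil_prefix (List.length_pos_iff.2 h)

theorem ListLt.map {B : Type*} (f : A → B) {u v : List A} (h : ListLt u v) :
    ListLt (u.map f) (v.map f) :=
  .of_prefix (h.1.map f) (by simpa using h.length_lt)

theorem RankGe.of_prefix {S : Set (List A)} {w u : List A} (h : w <+: u) {α : Ordinal.{0}}
    (hu : RankGe S ListLt u α) : RankGe S ListLt w α := by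
  rw [rankGe_iff] at hu ⊢
  intro β hβ
  obtain ⟨v, hv, huv, hrv⟩ := hu β hβ
  exact ⟨v, hv, .of_prefix (h.trans huv.1) (h.length_le.trans_lt huv.length_lt), hrv⟩

end ListLt

theorem res_length (X : Cantor) (n : ℕ) : (res X n).length = n := by simp [res]

theorem res_take (X : Cantor) (n m : ℕ) : (res X n).take m = res X (min m n) := by
  simp [res, ← List.map_take, List.take_range]

theorem getElem_res (X : Cantor) {n m : ℕ} (h : m < n) :
    (res X n)[m]'(by rwa [res_length]) = X m := by
  simp [res]

section TkTree

variable {T : Set Trip} {X Y : Cantor} {k : ℕ} {u : KNode}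

theorem bdry_take (X Y : Cantor) (k : ℕ) (u : KNode) (i m : ℕ) :
    bdry X Y k (u.take m) i = (bdry X Y k u i).take m := by
  unfold bdry col2
  split_ifs <;> simp [res_take, List.map_take]

theorem take_mem_tkTree (hT : IsTripleTree T) (hu : u ∈ TkTree T X Y k) (m : ℕ) :
    u.take m ∈ TkTree T X Y k := by
  refine ⟨fun e he => hu.1 e (List.take_subset m u he), fun i hi => ?_⟩
  rw [bdry_take, bdry_take, col1, List.map_take]
  exact hT.2 _ (hu.2 i hi) m

/-- Reversing every entry of the transposed encoding reads the chain `X, s₁, t₁, …, s_k, Y`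
backwards. -/
def chainReverse (u : KNode) : KNode := u.map fun e => (e.1.reverse, e.2.reverse)

theorem col1_chainReverse (hlen : ∀ e ∈ u, e.1.length = k) {i : ℕ} (hi : i < k) :
    col1 (chainReverse u) i = col1 u (k - 1 - i) := by
  simp only [col1, chainReverse, List.map_map]
  refine List.map_congr_left fun e he => ?_
  simp only [Function.comp, List.getD_reverse _ (hlen e he ▸ hi), hlen e he]

theorem col2_chainReverse (hlen : ∀ e ∈ u, e.2.length = k - 1) {j : ℕ} (hj : j < k - 1) :
    col2 (chainReverse u) j = col2 u (k - 2 - j) := by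
  simp only [col2, chainReverse, List.map_map]
  refine List.map_congr_left fun e he => ?_
  simp only [Function.comp, List.getD_reverse _ (hlen e he ▸ hj), hlen e he, Nat.sub_sub]

theorem bdry_chainReverse (hlen : ∀ e ∈ u, e.2.length = k - 1) {i : ℕ} (hi : i ≤ k)
    (hk : 1 ≤ k) : bdry Y X k (chainReverse u) i = bdry X Y k u (k - i) := by
  have hn : (chainReverse u).length = u.length := by simp [chainReverse]
  unfold bdry
  rw [hn]
  by_cases h0 : i = 0
  · simp [h0, show k ≠ 0 by omega]
  by_cases hik : i = k
  · simp [hik, show k ≠ 0 by omega]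
  rw [if_neg h0, if_neg hik, if_neg (show k - i ≠ 0 by omega),
    if_neg (show k - i ≠ k by omega), col2_chainReverse hlen (by omega)]
  congr 1; omega

theorem chainReverse_mem_tkTree (hswap : SwapClosed T) (hu : u ∈ TkTree T X Y k) :
    chainReverse u ∈ TkTree T Y X k := by
  have hlen1 : ∀ e ∈ u, e.1.length = k := fun e he => (hu.1 e he).1
  have hlen2 : ∀ e ∈ u, e.2.length = k - 1 := fun e he => (hu.1 e he).2
  refine ⟨fun e he => ?_, fun i hi => ?_⟩
  · obtain ⟨e', he', rfl⟩ := List.mem_map.1 he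
    simpa using hu.1 e' he'
  · rw [bdry_chainReverse hlen2 (by omega) (by omega),
      bdry_chainReverse hlen2 (by omega) (by omega), col1_chainReverse hlen1 hi, hswap,
      show k - (i + 1) = k - 1 - i by omega, show k - i = k - 1 - i + 1 by omega]
    exact hu.2 (k - 1 - i) (by omega)

end TkTree

section ChainJoin

variable {T : Set Trip} {X Y Z : Cantor} {k l : ℕ} {u v : KNode}

/-- Joins a chain from `X` to `Y` with one from `Y` to `Z`, inserting `Y↾n` as the new middle
Boolean sequence; entries of `v` beyond the length of `u` are ignored. -/
def chainJoin (Y : Cantor) (u v : KNode) : KNode :=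
  (List.range u.length).map fun m =>
    ((u.getD m ([], [])).1 ++ (v.getD m ([], [])).1,
      (u.getD m ([], [])).2 ++ Y m :: (v.getD m ([], [])).2)

@[simp]
theorem length_chainJoin (Y : Cantor) (u v : KNode) : (chainJoin Y u v).length = u.length := by
  simp [chainJoin]

theorem getElem_chainJoin (hl : u.length = v.length) {m : ℕ} (h : m < u.length) :
    (chainJoin Y u v)[m]'(by simpa using h) =
      (u[m].1 ++ (v[m]'(hl ▸ h)).1, u[m].2 ++ Y m :: (v[m]'(hl ▸ h)).2) := by
  simp [chainJoin, List.getElem?_eq_getElem h, List.getElem?_eq_getElem (hl ▸ h)]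

theorem chainJoin_take (Y : Cantor) (hl : u.length = v.length) (m : ℕ) :
    chainJoin Y (u.take m) (v.take m) = (chainJoin Y u v).take m := by
  refine List.ext_getElem (by simp) fun i h1 h2 => ?_
  simp only [length_chainJoin, List.length_take] at h1
  rw [getElem_chainJoin (by simp [hl]) (by simpa using h1)]
  simp only [List.getElem_take]
  rw [getElem_chainJoin hl (by omega)]

theorem col1_chainJoin_of_lt (hlen : ∀ e ∈ u, e.1.length = k) (hl : u.length = v.length)
    {i : ℕ} (hi : i < k) : col1 (chainJoin Y u v) i = col1 u i := by
  refine List.ext_getElem (by simp [col1]) fun m h1 h2 => ?_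
  simp only [col1, List.getElem_map, List.length_map, length_chainJoin] at h1 h2 ⊢
  have hm := hlen _ (List.getElem_mem h1)
  rw [getElem_chainJoin hl h1, List.getD_append _ _ _ _ (hm ▸ hi)]

theorem col1_chainJoin_of_le (hlen : ∀ e ∈ u, e.1.length = k) (hl : u.length = v.length)
    {i : ℕ} (hi : k ≤ i) : col1 (chainJoin Y u v) i = col1 v (i - k) := by
  refine List.ext_getElem (by simp [col1, hl]) fun m h1 h2 => ?_
  simp only [col1, List.getElem_map, List.length_map, length_chainJoin] at h1 h2 ⊢
  have hm := hlen _ (List.getElem_mem h1)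
  rw [getElem_chainJoin hl h1, List.getD_append_right _ _ _ _ (hm ▸ hi), hm]

theorem col2_chainJoin_of_lt (hlen : ∀ e ∈ u, e.2.length = k - 1) (hl : u.length = v.length)
    {j : ℕ} (hj : j < k - 1) : col2 (chainJoin Y u v) j = col2 u j := by
  refine List.ext_getElem (by simp [col2]) fun m h1 h2 => ?_
  simp only [col2, List.getElem_map, List.length_map, length_chainJoin] at h1 h2 ⊢
  have hm := hlen _ (List.getElem_mem h1)
  rw [getElem_chainJoin hl h1, List.getD_append _ _ _ _ (hm ▸ hj)]

theorem col2_chainJoin_self (hlen : ∀ e ∈ u, e.2.length = k - 1) (hl : u.length = v.length) :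
    col2 (chainJoin Y u v) (k - 1) = res Y u.length := by
  refine List.ext_getElem (by simp [col2, res_length]) fun m h1 h2 => ?_
  simp only [col2, List.getElem_map, List.length_map, length_chainJoin] at h1 ⊢
  have hm := hlen _ (List.getElem_mem h1)
  rw [getElem_chainJoin hl h1, getElem_res Y h1, List.getD_append_right _ _ _ _ hm.le, hm,
    Nat.sub_self, List.getD_cons_zero]

theorem col2_chainJoin_of_le (hlen : ∀ e ∈ u, e.2.length = k - 1) (hk : 1 ≤ k)
    (hl : u.length = v.length) {j : ℕ} (hj : k ≤ j) :
    col2 (chainJoin Y u v) j = col2 v (j - k) := by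
  refine List.ext_getElem (by simp [col2, hl]) fun m h1 h2 => ?_
  simp only [col2, List.getElem_map, List.length_map, length_chainJoin] at h1 h2 ⊢
  have hm := hlen _ (List.getElem_mem h1)
  rw [getElem_chainJoin hl h1, List.getD_append_right _ _ _ _ (by omega), hm,
    show j - (k - 1) = j - k + 1 by omega, List.getD_cons_succ]

theorem bdry_chainJoin_of_le (hlen : ∀ e ∈ u, e.2.length = k - 1) (hl' : 1 ≤ l)
    (hl : u.length = v.length) {i : ℕ} (hi : i ≤ k) :
    bdry X Z (k + l) (chainJoin Y u v) i = bdry X Y k u i := by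
  unfold bdry
  rw [length_chainJoin, if_neg (show i ≠ k + l by omega)]
  by_cases h0 : i = 0
  · simp [h0]
  rw [if_neg h0, if_neg h0]
  rcases hi.lt_or_eq with hi | rfl
  · rw [if_neg hi.ne, col2_chainJoin_of_lt hlen hl (by omega)]
  · rw [if_pos rfl, col2_chainJoin_self hlen hl]

theorem bdry_chainJoin_of_ge (hlen : ∀ e ∈ u, e.2.length = k - 1) (hk : 1 ≤ k)
    (hl' : 1 ≤ l) (hl : u.length = v.length) {i : ℕ} (hi : k ≤ i) (hi' : i ≤ k + l) :
    bdry X Z (k + l) (chainJoin Y u v) i = bdry Y Z l v (i - k) := by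
  unfold bdry
  rw [length_chainJoin, if_neg (show i ≠ 0 by omega), hl]
  by_cases hik : i = k
  · simp [hik, show l ≠ 0 by omega, col2_chainJoin_self hlen hl, hl]
  by_cases hiK : i = k + l
  · simp [hiK, show l ≠ 0 by omega]
  rw [if_neg hiK, if_neg (show i - k ≠ 0 by omega), if_neg (show i - k ≠ l by omega),
    col2_chainJoin_of_le hlen hk hl (by omega : k ≤ i - 1)]
  congr 1; omega

theorem chainJoin_mem_tkTree (hu : u ∈ TkTree T X Y k) (hv : v ∈ TkTree T Y Z l)
    (hk : 1 ≤ k) (hl' : 1 ≤ l) (hl : u.length = v.length) :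
    chainJoin Y u v ∈ TkTree T X Z (k + l) := by
  have hlen1 : ∀ e ∈ u, e.1.length = k := fun e he => (hu.1 e he).1
  have hlen2 : ∀ e ∈ u, e.2.length = k - 1 := fun e he => (hu.1 e he).2
  refine ⟨fun e he => ?_, fun i hi => ?_⟩
  · obtain ⟨m, hm, rfl⟩ := List.mem_map.1 he
    rw [List.mem_range] at hm
    have hum := hu.1 _ (List.getElem_mem hm)
    have hvm := hv.1 _ (List.getElem_mem (hl ▸ hm))
    simp [List.getD_eq_getElem?_getD, List.getElem?_eq_getElem hm,
      List.getElem?_eq_getElem (hl ▸ hm), hum.1, hum.2, hvm.1, hvm.2]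
    omega
  rcases lt_or_ge i k with h | h
  · rw [bdry_chainJoin_of_le hlen2 hl' hl h.le, bdry_chainJoin_of_le hlen2 hl' hl h,
      col1_chainJoin_of_lt hlen1 hl h]
    exact hu.2 i h
  · rw [bdry_chainJoin_of_ge hlen2 hk hl' hl h (by omega),
      bdry_chainJoin_of_ge hlen2 hk hl' hl (by omega) (by omega), col1_chainJoin_of_le hlen1 hl h,
      show i + 1 - k = i - k + 1 by omega]
    exact hv.2 (i - k) (by omega)

end ChainJoin

section Rank

variable {T : Set Trip} {X Y Z : Cantor} {k l : ℕ}

theorem rankGe_chainJoin (hT : IsTripleTree T) (hk : 1 ≤ k) (hl : 1 ≤ l) {α : Ordinal.{0}}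
    {u v : KNode} (huv : u.length = v.length) (hu : RankGe (TkTree T X Y k) ListLt u α)
    (hv : RankGe (TkTree T Y Z l) ListLt v α) :
    RankGe (TkTree T X Z (k + l)) ListLt (chainJoin Y u v) α := by
  induction α using WellFoundedLT.induction generalizing u v with
  | _ α IH =>
    rw [rankGe_iff] at hu hv ⊢
    intro β hβ
    obtain ⟨u', hu'T, huu', hu'⟩ := hu β hβ
    obtain ⟨v', hv'T, hvv', hv'⟩ := hv β hβ
    set m := min u'.length v'.length
    have hmu : (u'.take m).length = m := by simp [m]
    have hmv : (v'.take m).length = m := by simp [m]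
    have hlt : u.length < m := lt_min huu'.length_lt (huv ▸ hvv'.length_lt)
    have hpre : chainJoin Y u v <+: chainJoin Y (u'.take m) (v'.take m) := by
      rw [List.prefix_iff_eq_take, length_chainJoin, ← chainJoin_take Y (hmu.trans hmv.symm),
        List.take_take, List.take_take, min_eq_left hlt.le]
      congr 1
      · exact List.prefix_iff_eq_take.1 huu'.1
      · exact huv ▸ List.prefix_iff_eq_take.1 hvv'.1
    refine ⟨_, chainJoin_mem_tkTree (take_mem_tkTree hT hu'T m) (take_mem_tkTree hT hv'T m)
      hk hl (hmu.trans hmv.symm), .of_prefix hpre (by simpa [hmu] using hlt),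
      IH β hβ (hmu.trans hmv.symm) ((hu').of_prefix (List.take_prefix m u'))
        ((hv').of_prefix (List.take_prefix m v'))⟩

theorem TkRankGe.trans (hT : IsTripleTree T) (hk : 1 ≤ k) (hl : 1 ≤ l) {α : Ordinal.{0}}
    (hXY : TkRankGe T X Y k α) (hYZ : TkRankGe T Y Z l α) : TkRankGe T X Z (k + l) α :=
  ⟨chainJoin_mem_tkTree hXY.1 hYZ.1 hk hl rfl, rankGe_chainJoin hT hk hl rfl hXY.2 hYZ.2⟩

theorem TkRankGe.symm (hswap : SwapClosed T) {α : Ordinal.{0}} (h : TkRankGe T X Y k α) :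
    TkRankGe T Y X k α := by
  refine ⟨chainReverse_mem_tkTree hswap h.1, h.2.of_simulation (fun u w => w = chainReverse u)
    ?_ rfl⟩
  rintro u _ u' rfl hu' huu'
  exact ⟨_, chainReverse_mem_tkTree hswap hu', huu'.map _, rfl⟩

theorem tkRankGe_one_of_branch {f : ℕ → ℕ}
    (hf : ∀ n, (res X n, (List.range n).map f, res Y n) ∈ T) (α : Ordinal.{0}) :
    TkRankGe T X Y 1 α := by
  let c : ℕ → KNode := fun n => (List.range n).map fun m => ([f m], [])
  have hc : ∀ n, c n ∈ TkTree T X Y 1 := by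
    refine fun n => ⟨by simp [c], fun i hi => ?_⟩
    obtain rfl : i = 0 := by omega
    simpa [c, bdry, col1, Function.comp_def] using hf n
  have hlt : ∀ n, ListLt (c n) (c (n + 1)) := fun n =>
    .of_prefix (by simp only [c, List.range_succ, List.map_append]; exact List.prefix_append _ _)
      (by simp [c])
  exact ⟨hc 0, rankGe_of_chain c (fun n => hc (n + 1)) hlt α 0⟩

end Rank

section HatTree

variable {T : Set Trip} {X Y : Cantor} {k : ℕ} {u : KNode}

theorem some_mem_hatTree_iff :
    some (k, u) ∈ HatTree T X Y ↔ 1 ≤ k ∧ u ≠ [] ∧ u ∈ TkTree T X Y k := by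
  simp [HatTree]

theorem rankGe_hatTree_some_iff (hk : 1 ≤ k) {α : Ordinal.{0}} :
    RankGe (HatTree T X Y) HatLt (some (k, u)) α ↔ RankGe (TkTree T X Y k) ListLt u α := by
  constructor
  · refine RankGe.of_simulation (fun p w => p = some (k, w)) ?_ rfl
    rintro _ w (_ | ⟨k', w'⟩) rfl hp hlt
    · exact hlt.elim
    · obtain ⟨rfl, hww'⟩ := hlt
      exact ⟨w', (some_mem_hatTree_iff.1 hp).2.2, hww', rfl⟩
  · refine RankGe.of_simulation (fun w p => p = some (k, w)) ?_ rfl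
    rintro w _ w' rfl hw' hww'
    exact ⟨_, some_mem_hatTree_iff.2 ⟨hk, hww'.ne_nil, hw'⟩, ⟨rfl, hww'⟩, rfl⟩

theorem hatRankGe_iff (hT : IsTripleTree T) {α : Ordinal.{0}} :
    HatRankGe T X Y α ↔ ∀ β < α, ∃ k, 1 ≤ k ∧ TkRankGe T X Y k (Order.succ β) := by
  rw [HatRankGe, and_iff_right (show none ∈ HatTree T X Y from Or.inl rfl), rankGe_iff]
  simp only [TkRankGe, rankGe_succ_iff]
  refine forall₂_congr fun β _ => ⟨?_, ?_⟩
  · rintro ⟨_ | ⟨k, u⟩, hp, hlt, hrank⟩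
    · exact hlt.elim
    obtain ⟨hk, hne, hu⟩ := some_mem_hatTree_iff.1 hp
    exact ⟨k, hk, take_mem_tkTree hT hu 0, u, hu, .nil_left hne,
      (rankGe_hatTree_some_iff hk).1 hrank⟩
  · rintro ⟨k, hk, -, u, hu, hlt, hrank⟩
    exact ⟨some (k, u), some_mem_hatTree_iff.2 ⟨hk, hlt.ne_nil, hu⟩, trivial,
      (rankGe_hatTree_some_iff hk).2 hrank⟩

end HatTree

/-- If an equivalence relation `E` on Cantor space is represented by a
swap-closed triple tree `T`, then for every ordinal `α` the relation
`X E_α Y ↔ rk(T̂_{X,Y}) ≥ α` is an equivalence relation. -/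
theorem statement9 (E : Set (Cantor × Cantor)) (T : Set Trip)
    (hT : IsTripleTree T) (hswap : SwapClosed T) (hrep : Represents T E)
    (hE : Equivalence fun X Y : Cantor => (X, Y) ∈ E) :
    ∀ α : Ordinal.{0}, Equivalence fun X Y : Cantor => HatRankGe T X Y α := by
  intro α
  simp only [hatRankGe_iff hT]
  refine ⟨fun X β _ => ?_, fun h β hβ => ?_, fun hXY hYZ β hβ => ?_⟩
  · obtain ⟨f, hf⟩ := (hrep X X).1 (hE.refl X)
    exact ⟨1, le_rfl, tkRankGe_one_of_branch hf _⟩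
  · obtain ⟨k, hk, hXY⟩ := h β hβ
    exact ⟨k, hk, hXY.symm hswap⟩
  · obtain ⟨k, hk, hXY⟩ := hXY β hβ
    obtain ⟨l, hl, hYZ⟩ := hYZ β hβ
    exact ⟨k + l, by omega, hXY.trans hT hk hl hYZ⟩
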